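/- arXiv:1302.5395 — 3 statements merged into one kernel-verified Lean document; each statement's English description precedes it below -/
import Mathlib

section
/- Let U ⊆ ℝ² be open and let f, f* : U → ℝ³ be smooth immersions with unit normals N and N*. Suppose that for every p ∈ U: (i) the chord f*(p) − f(p) is a nonzero vector orthogonal to both N(p) and N*(p) (i.e. it is tangent to both surfaces at the corresponding points); (ii) ‖f*(p) − f(p)‖ = r for a constant r > 0; and (iii) ⟨N(p), N*(p)⟩ = cos τ for a constant τ with sin τ ≠ 0. Then the Gaussian curvatures of f and f* are constant and equal to −sin²τ/r² at every point of U. (Bäcklund theorem, Proposition 3.1.) -/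
noncomputable section

open Real

/-- Vectors in `ℝ³`. -/
abbrev V3 : Type := Fin 3 → ℝ

/-- Euclidean dot product on `ℝ³`. -/
def dot3 (u v : V3) : ℝ := u 0 * v 0 + u 1 * v 1 + u 2 * v 2

/-- Euclidean norm on `ℝ³`. -/
def norm3 (u : V3) : ℝ := Real.sqrt (dot3 u u)

/-- Cross product on `ℝ³`. -/
def cross3 (u v : V3) : V3 :=
  ![u 1 * v 2 - u 2 * v 1, u 2 * v 0 - u 0 * v 2, u 0 * v 1 - u 1 * v 0]

/-- Partial derivative in the first (`u`) coordinate direction. -/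
def Du (f : ℝ × ℝ → V3) (p : ℝ × ℝ) : V3 := fderiv ℝ f p (1, 0)

/-- Partial derivative in the second (`v`) coordinate direction. -/
def Dv (f : ℝ × ℝ → V3) (p : ℝ × ℝ) : V3 := fderiv ℝ f p (0, 1)

/-- First fundamental form coefficient `E = f_u · f_u`. -/
def Ecoef (f : ℝ × ℝ → V3) (p : ℝ × ℝ) : ℝ := dot3 (Du f p) (Du f p)

/-- First fundamental form coefficient `F = f_u · f_v`. -/
def Fcoef (f : ℝ × ℝ → V3) (p : ℝ × ℝ) : ℝ := dot3 (Du f p) (Dv f p)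

/-- First fundamental form coefficient `G = f_v · f_v`. -/
def Gcoef (f : ℝ × ℝ → V3) (p : ℝ × ℝ) : ℝ := dot3 (Dv f p) (Dv f p)

/-- Unit normal `N = (f_u × f_v)/‖f_u × f_v‖`. -/
def normalVec (f : ℝ × ℝ → V3) (p : ℝ × ℝ) : V3 :=
  (norm3 (cross3 (Du f p) (Dv f p)))⁻¹ • cross3 (Du f p) (Dv f p)

/-- Second fundamental form coefficient `l = f_uu · N`. -/
def lcoef (f : ℝ × ℝ → V3) (p : ℝ × ℝ) : ℝ := dot3 (Du (Du f) p) (normalVec f p)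

/-- Second fundamental form coefficient `m = f_uv · N`. -/
def mcoef (f : ℝ × ℝ → V3) (p : ℝ × ℝ) : ℝ := dot3 (Dv (Du f) p) (normalVec f p)

/-- Second fundamental form coefficient `n = f_vv · N`. -/
def ncoef (f : ℝ × ℝ → V3) (p : ℝ × ℝ) : ℝ := dot3 (Dv (Dv f) p) (normalVec f p)

/-- Gaussian curvature `K = (l n − m²)/(E G − F²)`. -/
def GaussK (f : ℝ × ℝ → V3) (p : ℝ × ℝ) : ℝ :=
  (lcoef f p * ncoef f p - (mcoef f p) ^ 2) /
    (Ecoef f p * Gcoef f p - (Fcoef f p) ^ 2)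

/-- Mean curvature `H = (E n − 2 F m + G l)/(2(E G − F²))`. -/
def MeanH (f : ℝ × ℝ → V3) (p : ℝ × ℝ) : ℝ :=
  (Ecoef f p * ncoef f p - 2 * Fcoef f p * mcoef f p + Gcoef f p * lcoef f p) /
    (2 * (Ecoef f p * Gcoef f p - (Fcoef f p) ^ 2))

/-- `f` is an immersion on `U`: the partial derivatives are linearly independent,
equivalently their cross product is nonzero. -/
def Immersed (f : ℝ × ℝ → V3) (U : Set (ℝ × ℝ)) : Prop :=
  ∀ p ∈ U, cross3 (Du f p) (Dv f p) ≠ 0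

/-! ### Auxiliary algebraic lemmas -/

open scoped ContDiff

lemma dot3_comm (u v : V3) : dot3 u v = dot3 v u := by simp [dot3]; ring

lemma dot3_cross_left (u v : V3) : dot3 u (cross3 u v) = 0 := by
  simp [dot3, cross3]; ring
lemma dot3_cross_right (u v : V3) : dot3 v (cross3 u v) = 0 := by
  simp [dot3, cross3]; ring
lemma lagrange (u v : V3) :
    dot3 (cross3 u v) (cross3 u v) = dot3 u u * dot3 v v - dot3 u v ^ 2 := by
  simp [dot3, cross3]; ring

lemma dot3_smul_left (c : ℝ) (u v : V3) : dot3 (c • u) v = c * dot3 u v := by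
  simp [dot3]; ring
lemma dot3_smul_right (c : ℝ) (u v : V3) : dot3 u (c • v) = c * dot3 u v := by
  simp [dot3]; ring
lemma dot3_add_left (u v w : V3) : dot3 (u + v) w = dot3 u w + dot3 v w := by
  simp [dot3]; ring
lemma dot3_neg_left (u v : V3) : dot3 (-u) v = -dot3 u v := by
  simp [dot3]; ring
lemma dot3_neg_both (u v : V3) : dot3 (-u) (-v) = dot3 u v := by
  simp [dot3]

lemma norm3_neg (u : V3) : norm3 (-u) = norm3 u := by
  rw [norm3, norm3, dot3_neg_both]

lemma det_identity (x y c a : V3) :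
    dot3 x (cross3 c a) * dot3 y (cross3 c a) =
      dot3 x y * (dot3 c c * dot3 a a - dot3 c a ^ 2)
      - dot3 x c * (dot3 y c * dot3 a a - dot3 c a * dot3 y a)
      + dot3 x a * (dot3 y c * dot3 c a - dot3 c c * dot3 y a) := by
  simp [dot3, cross3]; ring

lemma parseval (a c : V3) (ha : dot3 a a = 1) (hc : dot3 c c = 1)
    (hac : dot3 a c = 0) (x y : V3) :
    dot3 x y = dot3 x a * dot3 y a + dot3 x (cross3 c a) * dot3 y (cross3 c a)
      + dot3 x c * dot3 y c := by
  have h := det_identity x y c a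
  rw [dot3_comm c a] at h
  rw [ha, hc, hac] at h
  linarith [h]

lemma dot3_nonneg (u : V3) : 0 ≤ dot3 u u := by
  have : dot3 u u = u 0 ^ 2 + u 1 ^ 2 + u 2 ^ 2 := by simp [dot3]; ring
  rw [this]; positivity

lemma dot3_pos (u : V3) (hu : u ≠ 0) : 0 < dot3 u u := by
  rcases (dot3_nonneg u).lt_or_eq with h | h
  · exact h
  · exfalso; apply hu; funext i
    have h0 : u 0 ^ 2 + u 1 ^ 2 + u 2 ^ 2 = 0 := by simp [dot3] at h; nlinarith [h]
    have : u 0 = 0 ∧ u 1 = 0 ∧ u 2 = 0 := by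
      constructor; nlinarith; constructor; nlinarith; nlinarith
    fin_cases i <;> simp [this.1, this.2.1, this.2.2]

lemma norm3_eq (u : V3) (r : ℝ) (hr : 0 ≤ r) (h : norm3 u = r) : dot3 u u = r ^ 2 := by
  have hs := Real.sq_sqrt (dot3_nonneg u)
  rw [norm3] at h
  nlinarith [hs]

/-- the partials are tangent: they are orthogonal to the unit normal. -/
lemma tangent_du (g : ℝ × ℝ → V3) (q : ℝ × ℝ) : dot3 (Du g q) (normalVec g q) = 0 := by
  rw [normalVec, dot3_smul_right, dot3_cross_left, mul_zero]

lemma tangent_dv (g : ℝ × ℝ → V3) (q : ℝ × ℝ) : dot3 (Dv g q) (normalVec g q) = 0 := by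
  rw [normalVec, dot3_smul_right, dot3_cross_right, mul_zero]

/-- the unit normal has unit length at immersion points. -/
lemma unit_normal (g : ℝ × ℝ → V3) (q : ℝ × ℝ)
    (h : cross3 (Du g q) (Dv g q) ≠ 0) :
    dot3 (normalVec g q) (normalVec g q) = 1 := by
  have hd := dot3_pos _ h
  set d := dot3 (cross3 (Du g q) (Dv g q)) (cross3 (Du g q) (Dv g q)) with hd_def
  have hs : Real.sqrt d ≠ 0 := ne_of_gt (Real.sqrt_pos.2 hd)
  rw [normalVec, dot3_smul_left, dot3_smul_right, norm3, ← hd_def]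
  rw [← Real.sqrt_mul_self (le_of_lt hd)]
  field_simp
  rw [Real.sq_sqrt (Real.sqrt_nonneg _)]

/-! ### Differentiability toolkit -/

section Toolkit

variable {s : Set (ℝ × ℝ)} {g h : ℝ × ℝ → V3} {p : ℝ × ℝ}

lemma ContDiffOn.du (hs : IsOpen s) (hg : ContDiffOn ℝ ∞ g s) :
    ContDiffOn ℝ ∞ (Du g) s :=
  (hg.fderiv_of_isOpen hs (by norm_num)).clm_apply contDiffOn_const

lemma ContDiffOn.dv (hs : IsOpen s) (hg : ContDiffOn ℝ ∞ g s) :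
    ContDiffOn ℝ ∞ (Dv g) s :=
  (hg.fderiv_of_isOpen hs (by norm_num)).clm_apply contDiffOn_const

lemma ContDiffOn.diffAt {E : Type*} [NormedAddCommGroup E] [NormedSpace ℝ E]
    {F : ℝ × ℝ → E} (hs : IsOpen s) (hg : ContDiffOn ℝ ∞ F s) (hp : p ∈ s) :
    DifferentiableAt ℝ F p :=
  ((hg.differentiableOn (by norm_num)).differentiableAt (hs.mem_nhds hp))

lemma ContDiffOn.dot3' (hg : ContDiffOn ℝ ∞ g s) (hh : ContDiffOn ℝ ∞ h s) :
    ContDiffOn ℝ ∞ (fun q => dot3 (g q) (h q)) s := by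
  have c : ∀ i, ContDiffOn ℝ ∞ (fun q => g q i * h q i) s := fun i =>
    (contDiffOn_pi.1 hg i).mul (contDiffOn_pi.1 hh i)
  exact ((c 0).add (c 1)).add (c 2)

lemma ContDiffOn.cross3' (hg : ContDiffOn ℝ ∞ g s) (hh : ContDiffOn ℝ ∞ h s) :
    ContDiffOn ℝ ∞ (fun q => cross3 (g q) (h q)) s := by
  rw [contDiffOn_pi]
  intro i
  have c : ∀ i j, ContDiffOn ℝ ∞ (fun q => g q i * h q j) s := fun i j =>
    (contDiffOn_pi.1 hg i).mul (contDiffOn_pi.1 hh j)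
  fin_cases i
  · exact ((c 1 2).sub (c 2 1)).congr fun q _ => rfl
  · exact ((c 2 0).sub (c 0 2)).congr fun q _ => rfl
  · exact ((c 0 1).sub (c 1 0)).congr fun q _ => rfl

/-- derivative of a dot product. -/
lemma fderiv_dot3 (hg : DifferentiableAt ℝ g p) (hh : DifferentiableAt ℝ h p) (X : ℝ × ℝ) :
    fderiv ℝ (fun q => dot3 (g q) (h q)) p X
      = dot3 (fderiv ℝ g p X) (h p) + dot3 (g p) (fderiv ℝ h p X) := by
  have hgi : ∀ i : Fin 3, HasFDerivAt (fun q => g q i)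
      ((ContinuousLinearMap.proj i).comp (fderiv ℝ g p)) p := fun i => by
    exact
      (ContinuousLinearMap.proj (R := ℝ) (φ := fun _ : Fin 3 => ℝ) i).hasFDerivAt.comp
        p hg.hasFDerivAt
  have hhi : ∀ i : Fin 3, HasFDerivAt (fun q => h q i)
      ((ContinuousLinearMap.proj i).comp (fderiv ℝ h p)) p := fun i => by
    exact
      (ContinuousLinearMap.proj (R := ℝ) (φ := fun _ : Fin 3 => ℝ) i).hasFDerivAt.comp
        p hh.hasFDerivAt
  have hm : ∀ i : Fin 3, HasFDerivAt (fun q => g q i * h q i)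
      (g p i • ((ContinuousLinearMap.proj i).comp (fderiv ℝ h p)) +
       h p i • ((ContinuousLinearMap.proj i).comp (fderiv ℝ g p))) p := fun i =>
    (hgi i).mul (hhi i)
  have := (((hm 0).add (hm 1)).add (hm 2)).fderiv
  have e : (fun q => dot3 (g q) (h q)) =
      fun q => (g q 0 * h q 0 + g q 1 * h q 1) + g q 2 * h q 2 := by
    funext q; simp [dot3]
  rw [e, show (fun q => g q 0 * h q 0 + g q 1 * h q 1 + g q 2 * h q 2) =
      ((fun q => g q 0 * h q 0) + (fun q => g q 1 * h q 1)) + (fun q => g q 2 * h q 2) from rfl,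
    this]
  simp only [dot3, ContinuousLinearMap.add_apply, ContinuousLinearMap.coe_smul',
    Pi.smul_apply, ContinuousLinearMap.coe_comp', Function.comp_apply,
    ContinuousLinearMap.proj_apply, smul_eq_mul]
  ring

/-- symmetry of second derivatives. -/
lemma symm_second (hs : IsOpen s) (hg : ContDiffOn ℝ ∞ g s) (hp : p ∈ s) :
    Dv (Du g) p = Du (Dv g) p := by
  set F := fderiv ℝ g with hF
  have hFd : ∀ᶠ q in nhds p, HasFDerivAt g (F q) q := by
    filter_upwards [hs.mem_nhds hp] with q hq
    exact (hg.diffAt hs hq).hasFDerivAt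
  have hF1 : ContDiffOn ℝ ∞ F s := hg.fderiv_of_isOpen hs (by norm_num)
  have hFD : DifferentiableAt ℝ F p := hF1.diffAt hs hp
  set F2 := fderiv ℝ F p with hF2
  have hx : HasFDerivAt F F2 p := hFD.hasFDerivAt
  have symm := second_derivative_symmetric_of_eventually hFd hx (0,1) (1,0)
  have ev : ∀ w : ℝ × ℝ, fderiv ℝ (fun q => F q w) p
      = (ContinuousLinearMap.apply ℝ V3 w).comp F2 :=
    fun w => (((ContinuousLinearMap.apply ℝ V3 w).hasFDerivAt).comp p hx).fderiv
  show fderiv ℝ (fun q => F q (1,0)) p (0,1) = fderiv ℝ (fun q => F q (0,1)) p (1,0)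
  rw [ev (1,0), ev (0,1)]
  simpa using symm

end Toolkit

/-! ### The key one-sided lemma -/

lemma backlund_key
    (U : Set (ℝ × ℝ)) (hU : IsOpen U)
    (f fs : ℝ × ℝ → V3)
    (hf : ContDiffOn ℝ (⊤ : ℕ∞) f U) (hfs : ContDiffOn ℝ (⊤ : ℕ∞) fs U)
    (hfi : Immersed f U) (hfsi : Immersed fs U)
    (r τ : ℝ) (hr : 0 < r) (hτ : Real.sin τ ≠ 0)
    (htanf : ∀ p ∈ U, dot3 (fs p - f p) (normalVec f p) = 0)
    (htanfs : ∀ p ∈ U, dot3 (fs p - f p) (normalVec fs p) = 0)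
    (hdist : ∀ p ∈ U, norm3 (fs p - f p) = r)
    (hangle : ∀ p ∈ U, dot3 (normalVec f p) (normalVec fs p) = Real.cos τ) :
    ∀ p ∈ U, GaussK f p = -Real.sin τ ^ 2 / r ^ 2 := by
  have hfU : ContDiffOn ℝ ∞ f U := hf.of_le (by simp)
  have hfsU : ContDiffOn ℝ ∞ fs U := hfs.of_le (by simp)
  intro p hp
  obtain ⟨ε, hε, hBU⟩ := Metric.isOpen_iff.1 hU p hp
  set B := Metric.ball p ε with hB_def
  have hBo : IsOpen B := Metric.isOpen_ball
  have hpB : p ∈ B := Metric.mem_ball_self hε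
  have hrne : r ≠ 0 := ne_of_gt hr
  -- the moving frame
  set e1 : ℝ × ℝ → V3 := fun q => r⁻¹ • (fs q - f q) with he1_def
  set e3 : ℝ × ℝ → V3 := fun q => normalVec f q with he3_def
  set e2 : ℝ × ℝ → V3 := fun q => cross3 (e3 q) (e1 q) with he2_def
  set Ns : ℝ × ℝ → V3 := fun q => normalVec fs q with hNs_def
  -- smoothness of the frame on U
  have hwU : ContDiffOn ℝ ∞ (fun q => fs q - f q) U := hfsU.sub hfU
  have he1U : ContDiffOn ℝ ∞ e1 U := hwU.const_smul r⁻¹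
  have normal_smooth : ∀ (g : ℝ × ℝ → V3), ContDiffOn ℝ ∞ g U → Immersed g U →
      ContDiffOn ℝ ∞ (fun q => normalVec g q) U := by
    intro g hg hgi
    have hc : ContDiffOn ℝ ∞ (fun q => cross3 (Du g q) (Dv g q)) U :=
      (hg.du hU).cross3' (hg.dv hU)
    have hcc : ContDiffOn ℝ ∞
        (fun q => dot3 (cross3 (Du g q) (Dv g q)) (cross3 (Du g q) (Dv g q))) U :=
      hc.dot3' hc
    have hpos : ∀ q ∈ U, 0 < dot3 (cross3 (Du g q) (Dv g q)) (cross3 (Du g q) (Dv g q)) :=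
      fun q hq => dot3_pos _ (hgi q hq)
    have hnorm : ContDiffOn ℝ ∞ (fun q => norm3 (cross3 (Du g q) (Dv g q))) U := by
      intro q hq
      exact (Real.contDiffAt_sqrt (ne_of_gt (hpos q hq))).comp_contDiffWithinAt q (hcc q hq)
    have hnz : ∀ q ∈ U, norm3 (cross3 (Du g q) (Dv g q)) ≠ 0 := fun q hq =>
      ne_of_gt (Real.sqrt_pos.2 (hpos q hq))
    exact (hnorm.inv hnz).smul hc
  have he3U : ContDiffOn ℝ ∞ e3 U := normal_smooth f hfU hfi
  have hNsU : ContDiffOn ℝ ∞ Ns U := normal_smooth fs hfsU hfsi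
  have he2U : ContDiffOn ℝ ∞ e2 U := he3U.cross3' he1U
  -- orthonormality on U
  have hww : ∀ q ∈ U, dot3 (fs q - f q) (fs q - f q) = r ^ 2 :=
    fun q hq => norm3_eq _ r hr.le (hdist q hq)
  have he1e1 : ∀ q ∈ U, dot3 (e1 q) (e1 q) = 1 := by
    intro q hq
    rw [he1_def]
    simp only [dot3_smul_left, dot3_smul_right]
    rw [hww q hq]
    field_simp
  have he3e3 : ∀ q ∈ U, dot3 (e3 q) (e3 q) = 1 :=
    fun q hq => unit_normal f q (hfi q hq)
  have hNsNs : ∀ q ∈ U, dot3 (Ns q) (Ns q) = 1 :=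
    fun q hq => unit_normal fs q (hfsi q hq)
  have he1e3 : ∀ q ∈ U, dot3 (e1 q) (e3 q) = 0 := by
    intro q hq
    rw [he1_def]
    simp only [dot3_smul_left]
    rw [htanf q hq, mul_zero]
  have he1Ns : ∀ q ∈ U, dot3 (e1 q) (Ns q) = 0 := by
    intro q hq
    rw [he1_def]
    simp only [dot3_smul_left]
    rw [htanfs q hq, mul_zero]
  have he3Ns : ∀ q ∈ U, dot3 (e3 q) (Ns q) = Real.cos τ := fun q hq => hangle q hq
  have par : ∀ q ∈ U, ∀ x y : V3, dot3 x y =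
      dot3 x (e1 q) * dot3 y (e1 q) + dot3 x (e2 q) * dot3 y (e2 q)
        + dot3 x (e3 q) * dot3 y (e3 q) := by
    intro q hq x y
    have h := parseval (e1 q) (e3 q) (he1e1 q hq) (he3e3 q hq) (he1e3 q hq) x y
    rw [he2_def]
    exact h
  have he1e2 : ∀ q : ℝ × ℝ, dot3 (e1 q) (e2 q) = 0 := by
    intro q; rw [he2_def]; exact dot3_cross_right _ _
  have he2e3 : ∀ q : ℝ × ℝ, dot3 (e2 q) (e3 q) = 0 := by
    intro q; rw [he2_def, dot3_comm]; exact dot3_cross_left _ _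
  have he2e2 : ∀ q ∈ U, dot3 (e2 q) (e2 q) = 1 := by
    intro q hq
    rw [he2_def, lagrange, he3e3 q hq, he1e1 q hq, dot3_comm (e3 q) (e1 q)]
    rw [show dot3 (e1 q) (e3 q) = 0 from he1e3 q hq]
    norm_num
  -- the angle component σ
  set σ : ℝ := dot3 (Ns p) (e2 p) with hσ_def
  have hσsq : ∀ q ∈ U, dot3 (Ns q) (e2 q) ^ 2 = Real.sin τ ^ 2 := by
    intro q hq
    have h1 := par q hq (Ns q) (Ns q)
    rw [hNsNs q hq, dot3_comm (Ns q) (e1 q), he1Ns q hq] at h1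
    rw [show dot3 (Ns q) (e3 q) = Real.cos τ from by
      rw [dot3_comm]; exact he3Ns q hq] at h1
    have h2 : Real.sin τ ^ 2 = 1 - Real.cos τ ^ 2 := by
      have := Real.sin_sq_add_cos_sq τ; linarith
    rw [h2]
    nlinarith [h1]
  have hσ2 : σ ^ 2 = Real.sin τ ^ 2 := hσsq p hp
  have hσne : σ ≠ 0 := fun h0 => hτ (by nlinarith [hσ2, h0])
  -- σ is constant on B
  have hσconst : ∀ q ∈ B, dot3 (Ns q) (e2 q) = σ := by
    intro q hq
    by_contra hne
    have hq2 : dot3 (Ns q) (e2 q) ^ 2 = σ ^ 2 := by rw [hσsq q (hBU hq), hσ2]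
    have hfac : (dot3 (Ns q) (e2 q) - σ) * (dot3 (Ns q) (e2 q) + σ) = 0 := by
      nlinarith [hq2]
    have hqneg : dot3 (Ns q) (e2 q) = -σ := by
      rcases mul_eq_zero.1 hfac with h | h
      · exact absurd (by linarith : dot3 (Ns q) (e2 q) = σ) hne
      · linarith
    have hcont : ContinuousOn (fun q => dot3 (Ns q) (e2 q)) B :=
      ((hNsU.dot3' he2U).continuousOn).mono hBU
    have hconn : IsPreconnected B := (convex_ball p ε).isPreconnected
    have hzero : ∃ q0 ∈ B, dot3 (Ns q0) (e2 q0) = 0 := by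
      rcases le_or_gt σ 0 with hσle | hσlt
      · have hσneg : σ < 0 := lt_of_le_of_ne hσle hσne
        rcases hconn.intermediate_value₂ hpB hq hcont
          (continuousOn_const : ContinuousOn (fun _ => (0:ℝ)) B)
          (by linarith) (by rw [hqneg]; linarith) with ⟨q0, hq0, h⟩
        exact ⟨q0, hq0, h⟩
      · rcases hconn.intermediate_value₂ hq hpB hcont
          (continuousOn_const : ContinuousOn (fun _ => (0:ℝ)) B)
          (by rw [hqneg]; linarith) (by linarith) with ⟨q0, hq0, h⟩
        exact ⟨q0, hq0, h⟩
    rcases hzero with ⟨q0, hq0B, hq00⟩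
    have h := hσsq q0 (hBU hq0B)
    rw [hq00] at h
    exact hτ (by nlinarith [h])
  -- decomposition fs = f + r e1
  have hfs_eq : fs = fun x => f x + r • e1 x := by
    funext x
    rw [he1_def]
    show fs x = f x + r • r⁻¹ • (fs x - f x)
    rw [smul_smul, mul_inv_cancel₀ hrne, one_smul]
    abel
  have hDufs : ∀ q ∈ U, Du fs q = Du f q + r • Du e1 q := by
    intro q hq
    show fderiv ℝ fs q (1,0) = fderiv ℝ f q (1,0) + r • fderiv ℝ e1 q (1,0)
    conv_lhs => rw [hfs_eq]
    rw [fderiv_fun_add (hfU.diffAt hU hq) (g := fun y => r • e1 y) ((he1U.diffAt hU hq).const_smul r),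
      fderiv_fun_const_smul (he1U.diffAt hU hq) r]
    simp
  -- tangency of f
  have htfu : ∀ q : ℝ × ℝ, dot3 (Du f q) (e3 q) = 0 := fun q => tangent_du f q
  have htfv : ∀ q : ℝ × ℝ, dot3 (Dv f q) (e3 q) = 0 := fun q => tangent_dv f q
  -- first-order Bäcklund relations on B
  have hPu : ∀ q ∈ B, σ * (dot3 (Du f q) (e2 q) + r * dot3 (Du e1 q) (e2 q))
      + r * Real.cos τ * dot3 (Du e1 q) (e3 q) = 0 := by
    intro q hq
    have hqU : q ∈ U := hBU hq
    have h0 : dot3 (Du fs q) (Ns q) = 0 := tangent_du fs q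
    rw [hDufs q hqU, par q hqU _ (Ns q)] at h0
    rw [dot3_add_left, dot3_add_left, dot3_add_left] at h0
    simp only [dot3_smul_left] at h0
    rw [show dot3 (Ns q) (e1 q) = 0 from by rw [dot3_comm]; exact he1Ns q hqU,
      hσconst q hq,
      show dot3 (Ns q) (e3 q) = Real.cos τ from by rw [dot3_comm]; exact he3Ns q hqU,
      htfu q] at h0
    linear_combination h0
  have hPv : ∀ q ∈ B, σ * (dot3 (Dv f q) (e2 q) + r * dot3 (Dv e1 q) (e2 q))
      + r * Real.cos τ * dot3 (Dv e1 q) (e3 q) = 0 := by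
    intro q hq
    have hqU : q ∈ U := hBU hq
    have h0 : dot3 (Dv fs q) (Ns q) = 0 := tangent_dv fs q
    have hDvfs : Dv fs q = Dv f q + r • Dv e1 q := by
      show fderiv ℝ fs q (0,1) = fderiv ℝ f q (0,1) + r • fderiv ℝ e1 q (0,1)
      conv_lhs => rw [hfs_eq]
      rw [fderiv_fun_add (hfU.diffAt hU hqU) (g := fun y => r • e1 y) ((he1U.diffAt hU hqU).const_smul r),
        fderiv_fun_const_smul (he1U.diffAt hU hqU) r]
      simp
    rw [hDvfs, par q hqU _ (Ns q)] at h0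
    rw [dot3_add_left, dot3_add_left, dot3_add_left] at h0
    simp only [dot3_smul_left] at h0
    rw [show dot3 (Ns q) (e1 q) = 0 from by rw [dot3_comm]; exact he1Ns q hqU,
      hσconst q hq,
      show dot3 (Ns q) (e3 q) = Real.cos τ from by rw [dot3_comm]; exact he3Ns q hqU,
      htfv q] at h0
    linear_combination h0
  -- differentiability at p
  have de1 : DifferentiableAt ℝ e1 p := he1U.diffAt hU hp
  have de2 : DifferentiableAt ℝ e2 p := he2U.diffAt hU hp
  have de3 : DifferentiableAt ℝ e3 p := he3U.diffAt hU hp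
  have dDuf : DifferentiableAt ℝ (Du f) p := (hfU.du hU).diffAt hU hp
  have dDvf : DifferentiableAt ℝ (Dv f) p := (hfU.dv hU).diffAt hU hp
  have dDue1 : DifferentiableAt ℝ (Du e1) p := (he1U.du hU).diffAt hU hp
  have dDve1 : DifferentiableAt ℝ (Dv e1) p := (he1U.dv hU).diffAt hU hp
  -- derivative of constant dot products
  have dcd : ∀ (g h : ℝ × ℝ → V3) (c : ℝ), DifferentiableAt ℝ g p → DifferentiableAt ℝ h p →
      (∀ q ∈ B, dot3 (g q) (h q) = c) → ∀ X : ℝ × ℝ,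
      dot3 (fderiv ℝ g p X) (h p) + dot3 (g p) (fderiv ℝ h p X) = 0 := by
    intro g h c hg hh hc X
    have hev : (fun q => dot3 (g q) (h q)) =ᶠ[nhds p] (fun _ => c) :=
      Filter.eventuallyEq_of_mem (hBo.mem_nhds hpB) hc
    have h2 := fderiv_dot3 hg hh X
    rw [hev.fderiv_eq] at h2
    simp only [fderiv_fun_const, Pi.zero_apply, ContinuousLinearMap.zero_apply] at h2
    linarith [h2]
  -- component table at p
  have K11u : dot3 (Du e1 p) (e1 p) = 0 := by
    have h := dcd e1 e1 1 de1 de1 (fun q hq => he1e1 q (hBU hq)) (1,0)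
    rw [dot3_comm (e1 p)] at h
    show dot3 (fderiv ℝ e1 p (1,0)) (e1 p) = 0
    linarith [h]
  have K11v : dot3 (Dv e1 p) (e1 p) = 0 := by
    have h := dcd e1 e1 1 de1 de1 (fun q hq => he1e1 q (hBU hq)) (0,1)
    rw [dot3_comm (e1 p)] at h
    show dot3 (fderiv ℝ e1 p (0,1)) (e1 p) = 0
    linarith [h]
  have K22u : dot3 (Du e2 p) (e2 p) = 0 := by
    have h := dcd e2 e2 1 de2 de2 (fun q hq => he2e2 q (hBU hq)) (1,0)
    rw [dot3_comm (e2 p)] at h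
    show dot3 (fderiv ℝ e2 p (1,0)) (e2 p) = 0
    linarith [h]
  have K22v : dot3 (Dv e2 p) (e2 p) = 0 := by
    have h := dcd e2 e2 1 de2 de2 (fun q hq => he2e2 q (hBU hq)) (0,1)
    rw [dot3_comm (e2 p)] at h
    show dot3 (fderiv ℝ e2 p (0,1)) (e2 p) = 0
    linarith [h]
  have K33u : dot3 (Du e3 p) (e3 p) = 0 := by
    have h := dcd e3 e3 1 de3 de3 (fun q hq => he3e3 q (hBU hq)) (1,0)
    rw [dot3_comm (e3 p)] at h
    show dot3 (fderiv ℝ e3 p (1,0)) (e3 p) = 0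
    linarith [h]
  have K33v : dot3 (Dv e3 p) (e3 p) = 0 := by
    have h := dcd e3 e3 1 de3 de3 (fun q hq => he3e3 q (hBU hq)) (0,1)
    rw [dot3_comm (e3 p)] at h
    show dot3 (fderiv ℝ e3 p (0,1)) (e3 p) = 0
    linarith [h]
  have K12u : dot3 (Du e2 p) (e1 p) = -dot3 (Du e1 p) (e2 p) := by
    have h := dcd e1 e2 0 de1 de2 (fun q _ => he1e2 q) (1,0)
    rw [dot3_comm (e1 p)] at h
    show dot3 (fderiv ℝ e2 p (1,0)) (e1 p) = -dot3 (fderiv ℝ e1 p (1,0)) (e2 p)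
    linarith [h]
  have K12v : dot3 (Dv e2 p) (e1 p) = -dot3 (Dv e1 p) (e2 p) := by
    have h := dcd e1 e2 0 de1 de2 (fun q _ => he1e2 q) (0,1)
    rw [dot3_comm (e1 p)] at h
    show dot3 (fderiv ℝ e2 p (0,1)) (e1 p) = -dot3 (fderiv ℝ e1 p (0,1)) (e2 p)
    linarith [h]
  have K13u : dot3 (Du e3 p) (e1 p) = -dot3 (Du e1 p) (e3 p) := by
    have h := dcd e1 e3 0 de1 de3 (fun q hq => he1e3 q (hBU hq)) (1,0)
    rw [dot3_comm (e1 p)] at h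
    show dot3 (fderiv ℝ e3 p (1,0)) (e1 p) = -dot3 (fderiv ℝ e1 p (1,0)) (e3 p)
    linarith [h]
  have K13v : dot3 (Dv e3 p) (e1 p) = -dot3 (Dv e1 p) (e3 p) := by
    have h := dcd e1 e3 0 de1 de3 (fun q hq => he1e3 q (hBU hq)) (0,1)
    rw [dot3_comm (e1 p)] at h
    show dot3 (fderiv ℝ e3 p (0,1)) (e1 p) = -dot3 (fderiv ℝ e1 p (0,1)) (e3 p)
    linarith [h]
  have K23u : dot3 (Du e3 p) (e2 p) = -dot3 (Du e2 p) (e3 p) := by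
    have h := dcd e2 e3 0 de2 de3 (fun q _ => he2e3 q) (1,0)
    rw [dot3_comm (e2 p)] at h
    show dot3 (fderiv ℝ e3 p (1,0)) (e2 p) = -dot3 (fderiv ℝ e2 p (1,0)) (e3 p)
    linarith [h]
  have K23v : dot3 (Dv e3 p) (e2 p) = -dot3 (Dv e2 p) (e3 p) := by
    have h := dcd e2 e3 0 de2 de3 (fun q _ => he2e3 q) (0,1)
    rw [dot3_comm (e2 p)] at h
    show dot3 (fderiv ℝ e3 p (0,1)) (e2 p) = -dot3 (fderiv ℝ e2 p (0,1)) (e3 p)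
    linarith [h]
  -- mixed products via Parseval
  have mixed : ∀ x y : V3, dot3 x y =
      dot3 x (e1 p) * dot3 y (e1 p) + dot3 x (e2 p) * dot3 y (e2 p)
        + dot3 x (e3 p) * dot3 y (e3 p) := par p hp
    -- conversion between fderiv applications and Du/Dv
  have cnu : ∀ g : ℝ × ℝ → V3, fderiv ℝ g p (1,0) = Du g p := fun g => rfl
  have cnv : ∀ g : ℝ × ℝ → V3, fderiv ℝ g p (0,1) = Dv g p := fun g => rfl
  -- derivative wrappers
  have dcdu : ∀ (g h : ℝ × ℝ → V3) (c : ℝ), DifferentiableAt ℝ g p → DifferentiableAt ℝ h p →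
      (∀ q ∈ B, dot3 (g q) (h q) = c) →
      dot3 (Du g p) (h p) + dot3 (g p) (Du h p) = 0 := fun g h c hg hh hc =>
    dcd g h c hg hh hc (1,0)
  have dcdv : ∀ (g h : ℝ × ℝ → V3) (c : ℝ), DifferentiableAt ℝ g p → DifferentiableAt ℝ h p →
      (∀ q ∈ B, dot3 (g q) (h q) = c) →
      dot3 (Dv g p) (h p) + dot3 (g p) (Dv h p) = 0 := fun g h c hg hh hc =>
    dcd g h c hg hh hc (0,1)
  -- component table at p
  have K11u : dot3 (Du e1 p) (e1 p) = 0 := by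
    have h := dcdu e1 e1 1 de1 de1 (fun q hq => he1e1 q (hBU hq))
    rw [dot3_comm (e1 p)] at h; linarith [h]
  have K11v : dot3 (Dv e1 p) (e1 p) = 0 := by
    have h := dcdv e1 e1 1 de1 de1 (fun q hq => he1e1 q (hBU hq))
    rw [dot3_comm (e1 p)] at h; linarith [h]
  have K22u : dot3 (Du e2 p) (e2 p) = 0 := by
    have h := dcdu e2 e2 1 de2 de2 (fun q hq => he2e2 q (hBU hq))
    rw [dot3_comm (e2 p)] at h; linarith [h]
  have K22v : dot3 (Dv e2 p) (e2 p) = 0 := by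
    have h := dcdv e2 e2 1 de2 de2 (fun q hq => he2e2 q (hBU hq))
    rw [dot3_comm (e2 p)] at h; linarith [h]
  have K33u : dot3 (Du e3 p) (e3 p) = 0 := by
    have h := dcdu e3 e3 1 de3 de3 (fun q hq => he3e3 q (hBU hq))
    rw [dot3_comm (e3 p)] at h; linarith [h]
  have K33v : dot3 (Dv e3 p) (e3 p) = 0 := by
    have h := dcdv e3 e3 1 de3 de3 (fun q hq => he3e3 q (hBU hq))
    rw [dot3_comm (e3 p)] at h; linarith [h]
  have K12u : dot3 (Du e2 p) (e1 p) = -dot3 (Du e1 p) (e2 p) := by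
    have h := dcdu e1 e2 0 de1 de2 (fun q _ => he1e2 q)
    rw [dot3_comm (e1 p)] at h; linarith [h]
  have K12v : dot3 (Dv e2 p) (e1 p) = -dot3 (Dv e1 p) (e2 p) := by
    have h := dcdv e1 e2 0 de1 de2 (fun q _ => he1e2 q)
    rw [dot3_comm (e1 p)] at h; linarith [h]
  have K13u : dot3 (Du e3 p) (e1 p) = -dot3 (Du e1 p) (e3 p) := by
    have h := dcdu e1 e3 0 de1 de3 (fun q hq => he1e3 q (hBU hq))
    rw [dot3_comm (e1 p)] at h; linarith [h]
  have K13v : dot3 (Dv e3 p) (e1 p) = -dot3 (Dv e1 p) (e3 p) := by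
    have h := dcdv e1 e3 0 de1 de3 (fun q hq => he1e3 q (hBU hq))
    rw [dot3_comm (e1 p)] at h; linarith [h]
  have K23u : dot3 (Du e3 p) (e2 p) = -dot3 (Du e2 p) (e3 p) := by
    have h := dcdu e2 e3 0 de2 de3 (fun q _ => he2e3 q)
    rw [dot3_comm (e2 p)] at h; linarith [h]
  have K23v : dot3 (Dv e3 p) (e2 p) = -dot3 (Dv e2 p) (e3 p) := by
    have h := dcdv e2 e3 0 de2 de3 (fun q _ => he2e3 q)
    rw [dot3_comm (e2 p)] at h; linarith [h]
  -- second fundamental form relations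
  have Kf3uu := dcdu (Du f) e3 0 dDuf de3 (fun q _ => htfu q)
  have Kf3uv := dcdv (Du f) e3 0 dDuf de3 (fun q _ => htfu q)
  have Kf3vu := dcdu (Dv f) e3 0 dDvf de3 (fun q _ => htfv q)
  have Kf3vv := dcdv (Dv f) e3 0 dDvf de3 (fun q _ => htfv q)
  -- symmetry of second derivatives
  have hsymf : Dv (Du f) p = Du (Dv f) p := symm_second hU hfU hp
  have hsyme1 : Dv (Du e1) p = Du (Dv e1) p := symm_second hU he1U hp
  -- differentiability of the scalar functions
  have dA2 : DifferentiableAt ℝ (fun q => dot3 (Du f q) (e2 q)) p :=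
    ((hfU.du hU).dot3' he2U).diffAt hU hp
  have dB2 : DifferentiableAt ℝ (fun q => dot3 (Dv f q) (e2 q)) p :=
    ((hfU.dv hU).dot3' he2U).diffAt hU hp
  have dR12u : DifferentiableAt ℝ (fun q => dot3 (Du e1 q) (e2 q)) p :=
    ((he1U.du hU).dot3' he2U).diffAt hU hp
  have dR12v : DifferentiableAt ℝ (fun q => dot3 (Dv e1 q) (e2 q)) p :=
    ((he1U.dv hU).dot3' he2U).diffAt hU hp
  have dR13u : DifferentiableAt ℝ (fun q => dot3 (Du e1 q) (e3 q)) p :=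
    ((he1U.du hU).dot3' he3U).diffAt hU hp
  have dR13v : DifferentiableAt ℝ (fun q => dot3 (Dv e1 q) (e3 q)) p :=
    ((he1U.dv hU).dot3' he3U).diffAt hU hp
  -- differentiating the first-order relation Pu in the v-direction
  have HPu : HasFDerivAt
      (fun q => σ * (dot3 (Du f q) (e2 q) + r * dot3 (Du e1 q) (e2 q))
        + r * Real.cos τ * dot3 (Du e1 q) (e3 q))
      (σ • (fderiv ℝ (fun q => dot3 (Du f q) (e2 q)) p
          + r • fderiv ℝ (fun q => dot3 (Du e1 q) (e2 q)) p)
        + (r * Real.cos τ) • fderiv ℝ (fun q => dot3 (Du e1 q) (e3 q)) p) p :=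
    ((dA2.hasFDerivAt.add (dR12u.hasFDerivAt.const_mul r)).const_mul σ).add
      (dR13u.hasFDerivAt.const_mul (r * Real.cos τ))
  have HPv : HasFDerivAt
      (fun q => σ * (dot3 (Dv f q) (e2 q) + r * dot3 (Dv e1 q) (e2 q))
        + r * Real.cos τ * dot3 (Dv e1 q) (e3 q))
      (σ • (fderiv ℝ (fun q => dot3 (Dv f q) (e2 q)) p
          + r • fderiv ℝ (fun q => dot3 (Dv e1 q) (e2 q)) p)
        + (r * Real.cos τ) • fderiv ℝ (fun q => dot3 (Dv e1 q) (e3 q)) p) p :=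
    ((dB2.hasFDerivAt.add (dR12v.hasFDerivAt.const_mul r)).const_mul σ).add
      (dR13v.hasFDerivAt.const_mul (r * Real.cos τ))
  have hPu0 : fderiv ℝ (fun q => σ * (dot3 (Du f q) (e2 q) + r * dot3 (Du e1 q) (e2 q))
      + r * Real.cos τ * dot3 (Du e1 q) (e3 q)) p = 0 := by
    have hev : (fun q => σ * (dot3 (Du f q) (e2 q) + r * dot3 (Du e1 q) (e2 q))
        + r * Real.cos τ * dot3 (Du e1 q) (e3 q)) =ᶠ[nhds p] (fun _ => (0:ℝ)) :=
      Filter.eventuallyEq_of_mem (hBo.mem_nhds hpB) hPu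
    rw [hev.fderiv_eq]
    simp
  have hPv0 : fderiv ℝ (fun q => σ * (dot3 (Dv f q) (e2 q) + r * dot3 (Dv e1 q) (e2 q))
      + r * Real.cos τ * dot3 (Dv e1 q) (e3 q)) p = 0 := by
    have hev : (fun q => σ * (dot3 (Dv f q) (e2 q) + r * dot3 (Dv e1 q) (e2 q))
        + r * Real.cos τ * dot3 (Dv e1 q) (e3 q)) =ᶠ[nhds p] (fun _ => (0:ℝ)) :=
      Filter.eventuallyEq_of_mem (hBo.mem_nhds hpB) hPv
    rw [hev.fderiv_eq]
    simp
  have hE3u : σ * ((dot3 (Dv (Du f) p) (e2 p) + dot3 (Du f p) (Dv e2 p))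
      + r * (dot3 (Dv (Du e1) p) (e2 p) + dot3 (Du e1 p) (Dv e2 p)))
      + r * Real.cos τ * (dot3 (Dv (Du e1) p) (e3 p) + dot3 (Du e1 p) (Dv e3 p)) = 0 := by
    have h := (HPu.fderiv).symm.trans hPu0
    have h2 := congrArg (fun L : (ℝ × ℝ) →L[ℝ] ℝ => L (0,1)) h
    simp only [ContinuousLinearMap.add_apply, ContinuousLinearMap.coe_smul',
      Pi.smul_apply, smul_eq_mul, ContinuousLinearMap.zero_apply] at h2
    rw [fderiv_dot3 dDuf de2 (0,1), fderiv_dot3 dDue1 de2 (0,1),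
      fderiv_dot3 dDue1 de3 (0,1)] at h2
    simp only [cnv] at h2
    linarith [h2]
  have hE3v : σ * ((dot3 (Du (Dv f) p) (e2 p) + dot3 (Dv f p) (Du e2 p))
      + r * (dot3 (Du (Dv e1) p) (e2 p) + dot3 (Dv e1 p) (Du e2 p)))
      + r * Real.cos τ * (dot3 (Du (Dv e1) p) (e3 p) + dot3 (Dv e1 p) (Du e3 p)) = 0 := by
    have h := (HPv.fderiv).symm.trans hPv0
    have h2 := congrArg (fun L : (ℝ × ℝ) →L[ℝ] ℝ => L (1,0)) h
    simp only [ContinuousLinearMap.add_apply, ContinuousLinearMap.coe_smul',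
      Pi.smul_apply, smul_eq_mul, ContinuousLinearMap.zero_apply] at h2
    rw [fderiv_dot3 dDvf de2 (1,0), fderiv_dot3 dDve1 de2 (1,0),
      fderiv_dot3 dDve1 de3 (1,0)] at h2
    simp only [cnu] at h2
    linarith [h2]
  rw [← hsymf, ← hsyme1] at hE3v
  -- mixed products via Parseval
  have m1 : dot3 (Du f p) (Dv e2 p)
      = -(dot3 (Du f p) (e1 p) * dot3 (Dv e1 p) (e2 p)) := by
    rw [mixed (Du f p) (Dv e2 p), K12v, K22v, htfu p]; ring
  have m2 : dot3 (Dv f p) (Du e2 p)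
      = -(dot3 (Dv f p) (e1 p) * dot3 (Du e1 p) (e2 p)) := by
    rw [mixed (Dv f p) (Du e2 p), K12u, K22u, htfv p]; ring
  have m3 : dot3 (Du e1 p) (Dv e2 p)
      = dot3 (Du e1 p) (e3 p) * dot3 (Dv e2 p) (e3 p) := by
    rw [mixed (Du e1 p) (Dv e2 p), K11u, K12v, K22v]; ring
  have m4 : dot3 (Dv e1 p) (Du e2 p)
      = dot3 (Dv e1 p) (e3 p) * dot3 (Du e2 p) (e3 p) := by
    rw [mixed (Dv e1 p) (Du e2 p), K11v, K12u, K22u]; ring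
  have m5 : dot3 (Du e1 p) (Dv e3 p)
      = -(dot3 (Du e1 p) (e2 p) * dot3 (Dv e2 p) (e3 p)) := by
    rw [mixed (Du e1 p) (Dv e3 p), K11u, K13v, K23v, K33v]; ring
  have m6 : dot3 (Dv e1 p) (Du e3 p)
      = -(dot3 (Dv e1 p) (e2 p) * dot3 (Du e2 p) (e3 p)) := by
    rw [mixed (Dv e1 p) (Du e3 p), K11v, K13u, K23u, K33u]; ring
  have mf5 : dot3 (Du f p) (Dv e3 p)
      = -(dot3 (Du f p) (e1 p) * dot3 (Dv e1 p) (e3 p))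
        - dot3 (Du f p) (e2 p) * dot3 (Dv e2 p) (e3 p) := by
    rw [mixed (Du f p) (Dv e3 p), K13v, K23v, K33v, htfu p]; ring
  have mf6 : dot3 (Dv f p) (Du e3 p)
      = -(dot3 (Dv f p) (e1 p) * dot3 (Du e1 p) (e3 p))
        - dot3 (Dv f p) (e2 p) * dot3 (Du e2 p) (e3 p) := by
    rw [mixed (Dv f p) (Du e3 p), K13u, K23u, K33u, htfv p]; ring
  have mf7 : dot3 (Du f p) (Du e3 p)
      = -(dot3 (Du f p) (e1 p) * dot3 (Du e1 p) (e3 p))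
        - dot3 (Du f p) (e2 p) * dot3 (Du e2 p) (e3 p) := by
    rw [mixed (Du f p) (Du e3 p), K13u, K23u, K33u, htfu p]; ring
  have mf8 : dot3 (Dv f p) (Dv e3 p)
      = -(dot3 (Dv f p) (e1 p) * dot3 (Dv e1 p) (e3 p))
        - dot3 (Dv f p) (e2 p) * dot3 (Dv e2 p) (e3 p) := by
    rw [mixed (Dv f p) (Dv e3 p), K13v, K23v, K33v, htfv p]; ring
  have E1 := hPu p hpB
  have E2 := hPv p hpB
  -- abbreviate the ten scalars
  set a1 := dot3 (Du f p) (e1 p) with ha1_def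
  set a2 := dot3 (Du f p) (e2 p) with ha2_def
  set b1 := dot3 (Dv f p) (e1 p) with hb1_def
  set b2 := dot3 (Dv f p) (e2 p) with hb2_def
  set Q12u := dot3 (Du e1 p) (e2 p) with hQ12u_def
  set Q12v := dot3 (Dv e1 p) (e2 p) with hQ12v_def
  set Q13u := dot3 (Du e1 p) (e3 p) with hQ13u_def
  set Q13v := dot3 (Dv e1 p) (e3 p) with hQ13v_def
  set Q23u := dot3 (Du e2 p) (e3 p) with hQ23u_def
  set Q23v := dot3 (Dv e2 p) (e3 p) with hQ23v_def
  -- the integrability relation E3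
  have hE3 : σ * (-(a1 * Q12v) + b1 * Q12u)
      + σ * r * (Q13u * Q23v - Q13v * Q23u)
      + r * Real.cos τ * (-(Q12u * Q23v) + Q12v * Q23u) = 0 := by
    linear_combination hE3u - hE3v - σ * m1 + σ * m2 - (σ * r) * m3 + (σ * r) * m4
      - (r * Real.cos τ) * m5 + (r * Real.cos τ) * m6
  -- Codazzi-type symmetry relation E4
  have h1m : dot3 (Dv (Du f) p) (e3 p) = a1 * Q13v + a2 * Q23v := by
    linear_combination Kf3uv - mf5
  have h2m : dot3 (Du (Dv f) p) (e3 p) = b1 * Q13u + b2 * Q23u := by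
    linear_combination Kf3vu - mf6
  have E4 : a1 * Q13v + a2 * Q23v = b1 * Q13u + b2 * Q23u := by
    rw [hsymf] at h1m
    linear_combination h2m - h1m
  -- pythagoras
  have hpyth : σ ^ 2 + Real.cos τ ^ 2 = 1 := by
    have := Real.sin_sq_add_cos_sq τ
    linarith [hσ2]
  -- the main curvature relation
  have hMain : r ^ 2 * (Q13u * Q23v - Q13v * Q23u)
      + σ ^ 2 * (a1 * b2 - a2 * b1) = 0 := by
    linear_combination (σ * r) * hE3 + (-(σ * b1) + r * Real.cos τ * Q23v) * E1
      + (σ * a1 - r * Real.cos τ * Q23u) * E2 - (σ * r * Real.cos τ) * E4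
      - (r ^ 2 * (Q13u * Q23v - Q13v * Q23u)) * hpyth
  -- the fundamental form coefficients
  have he3p : normalVec f p = e3 p := by rw [he3_def]
  have hEc : Ecoef f p = a1 ^ 2 + a2 ^ 2 := by
    have h := mixed (Du f p) (Du f p)
    rw [htfu p] at h
    rw [Ecoef]
    linear_combination h
  have hFc : Fcoef f p = a1 * b1 + a2 * b2 := by
    have h := mixed (Du f p) (Dv f p)
    rw [htfu p, htfv p] at h
    rw [Fcoef]
    linear_combination h
  have hGc : Gcoef f p = b1 ^ 2 + b2 ^ 2 := by
    have h := mixed (Dv f p) (Dv f p)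
    rw [htfv p] at h
    rw [Gcoef]
    linear_combination h
  have hl : lcoef f p = a1 * Q13u + a2 * Q23u := by
    rw [lcoef, he3p]
    linear_combination Kf3uu - mf7
  have hmm : mcoef f p = a1 * Q13v + a2 * Q23v := by
    rw [mcoef, he3p]
    linear_combination Kf3uv - mf5
  have hn : ncoef f p = b1 * Q13v + b2 * Q23v := by
    rw [ncoef, he3p]
    linear_combination Kf3vv - mf8
  -- the denominator is positive
  have hden_eq : Ecoef f p * Gcoef f p - Fcoef f p ^ 2 = (a1 * b2 - a2 * b1) ^ 2 := by
    rw [hEc, hFc, hGc]; ring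
  have hden_pos : 0 < Ecoef f p * Gcoef f p - Fcoef f p ^ 2 := by
    have hl2 := lagrange (Du f p) (Dv f p)
    have hp2 := dot3_pos _ (hfi p hp)
    rw [Ecoef, Fcoef, Gcoef]
    linarith [hl2, hp2]
  have hD2pos : 0 < (a1 * b2 - a2 * b1) ^ 2 := by rw [← hden_eq]; exact hden_pos
  have hD2ne : ((a1 * b2 - a2 * b1) ^ 2 : ℝ) ≠ 0 := ne_of_gt hD2pos
  have hr2ne : (r ^ 2 : ℝ) ≠ 0 := pow_ne_zero 2 hrne
  -- conclude
  rw [GaussK, hl, hmm, hn, hden_eq, div_eq_div_iff hD2ne hr2ne]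
  linear_combination (a1 * b2 - a2 * b1) * hMain
    - (r ^ 2 * (a1 * Q13v + a2 * Q23v)) * E4
    - (a1 * b2 - a2 * b1) ^ 2 * hσ2


/-- Bäcklund theorem (Proposition 3.1): if the chord joining corresponding points of two
immersed surfaces is nonzero and tangent to both surfaces, has constant length `r > 0`, and
the normals make a constant angle `τ` with `sin τ ≠ 0`, then both surfaces have constant
Gaussian curvature `−sin²τ/r²`. -/
theorem backlund_theorem
    (U : Set (ℝ × ℝ)) (hU : IsOpen U)
    (f fs : ℝ × ℝ → V3)
    (hf : ContDiffOn ℝ (⊤ : ℕ∞) f U) (hfs : ContDiffOn ℝ (⊤ : ℕ∞) fs U)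
    (hfi : Immersed f U) (hfsi : Immersed fs U)
    (r τ : ℝ) (hr : 0 < r) (hτ : Real.sin τ ≠ 0)
    (hchord : ∀ p ∈ U, fs p - f p ≠ 0)
    (htanf : ∀ p ∈ U, dot3 (fs p - f p) (normalVec f p) = 0)
    (htanfs : ∀ p ∈ U, dot3 (fs p - f p) (normalVec fs p) = 0)
    (hdist : ∀ p ∈ U, norm3 (fs p - f p) = r)
    (hangle : ∀ p ∈ U, dot3 (normalVec f p) (normalVec fs p) = Real.cos τ) :
    ∀ p ∈ U, GaussK f p = -Real.sin τ ^ 2 / r ^ 2 ∧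
      GaussK fs p = -Real.sin τ ^ 2 / r ^ 2 := by
  have neg_eq : ∀ p : ℝ × ℝ, f p - fs p = -(fs p - f p) := by
    intro p; funext i; simp
  have h1 := backlund_key U hU f fs hf hfs hfi hfsi r τ hr hτ htanf htanfs hdist hangle
  have h2 := backlund_key U hU fs f hfs hf hfsi hfi r τ hr hτ
    (fun p hp => by rw [neg_eq p, dot3_neg_left, htanfs p hp, neg_zero])
    (fun p hp => by rw [neg_eq p, dot3_neg_left, htanf p hp, neg_zero])
    (fun p hp => by rw [neg_eq p, norm3_neg]; exact hdist p hp)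
    (fun p hp => by rw [dot3_comm]; exact hangle p hp)
  exact fun p hp => ⟨h1 p hp, h2 p hp⟩
end
end

section
/- Let λ ≠ 0 be a real constant and let ψ, ψ* : ℝ² → ℝ be C² functions satisfying the Bäcklund system ∂_u((ψ + ψ*)/2) = (1/λ) sin((ψ − ψ*)/2) and ∂_v((ψ − ψ*)/2) = λ sin((ψ + ψ*)/2). Then both ψ and ψ* satisfy the sine-Gordon equation: ∂²ψ/∂u∂v = sin ψ and ∂²ψ*/∂u∂v = sin ψ*. -/
/-!
Write `a = (ψ + ψ*)/2` and `b = (ψ - ψ*)/2`, so that the Bäcklund system reads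
`a_u = λ⁻¹ sin b`, `b_v = λ sin a`. Differentiating the first equation in `v` and the second
in `u` (using `b_uv = b_vu`), each equation feeds the other:
`a_uv = λ⁻¹ cos b · λ sin a = sin a cos b` and `b_uv = λ cos a · λ⁻¹ sin b = cos a sin b`.
Adding and subtracting gives `ψ_uv = sin (a + b) = sin ψ` and `ψ*_uv = sin (a - b) = sin ψ*`.
-/

noncomputable section

/-- Partial derivative of a scalar function in the first (`u`) coordinate direction. -/
def du1 (g : ℝ × ℝ → ℝ) (p : ℝ × ℝ) : ℝ := fderiv ℝ g p (1, 0)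

/-- Partial derivative of a scalar function in the second (`v`) coordinate direction. -/
def dv1 (g : ℝ × ℝ → ℝ) (p : ℝ × ℝ) : ℝ := fderiv ℝ g p (0, 1)

theorem fderiv_const_mul_sin_apply {E : Type*} [NormedAddCommGroup E] [NormedSpace ℝ E]
    {w : E → ℝ} {p : E} (hw : DifferentiableAt ℝ w p) (c : ℝ) (e : E) :
    fderiv ℝ (fun q => c * Real.sin (w q)) p e = c * Real.cos (w p) * fderiv ℝ w p e := by
  rw [fderiv_const_mul hw.sin, fderiv_sin hw]
  simp only [smul_apply, smul_eq_mul, mul_assoc]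

theorem du1_const_mul_sin {w : ℝ × ℝ → ℝ} (hw : Differentiable ℝ w) (c : ℝ) (p : ℝ × ℝ) :
    du1 (fun q => c * Real.sin (w q)) p = c * Real.cos (w p) * du1 w p :=
  fderiv_const_mul_sin_apply (hw p) c _

theorem dv1_const_mul_sin {w : ℝ × ℝ → ℝ} (hw : Differentiable ℝ w) (c : ℝ) (p : ℝ × ℝ) :
    dv1 (fun q => c * Real.sin (w q)) p = c * Real.cos (w p) * dv1 w p :=
  fderiv_const_mul_sin_apply (hw p) c _

section Linearity

variable {f g : ℝ × ℝ → ℝ} (hf : Differentiable ℝ f) (hg : Differentiable ℝ g)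
include hf hg

theorem du1_add : du1 (f + g) = du1 f + du1 g := by
  funext p
  simp only [du1, fderiv_add (hf p) (hg p), add_apply, Pi.add_apply]

theorem du1_sub : du1 (f - g) = du1 f - du1 g := by
  funext p
  simp only [du1, fderiv_sub (hf p) (hg p), sub_apply, Pi.sub_apply]

theorem dv1_add : dv1 (f + g) = dv1 f + dv1 g := by
  funext p
  simp only [dv1, fderiv_add (hf p) (hg p), add_apply, Pi.add_apply]

theorem dv1_sub : dv1 (f - g) = dv1 f - dv1 g := by
  funext p
  simp only [dv1, fderiv_sub (hf p) (hg p), sub_apply, Pi.sub_apply]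

end Linearity

theorem fderiv_fderiv_apply {E F : Type*} [NormedAddCommGroup E] [NormedSpace ℝ E]
    [NormedAddCommGroup F] [NormedSpace ℝ F] {g : E → F} {p : E}
    (hg : DifferentiableAt ℝ (fderiv ℝ g) p) (e e' : E) :
    fderiv ℝ (fun q => fderiv ℝ g q e) p e' = fderiv ℝ (fderiv ℝ g) p e' e := by
  rw [fderiv_clm_apply hg (differentiableAt_const e)]
  simp

section SecondOrder

variable {g : ℝ × ℝ → ℝ} (hg : ContDiff ℝ 2 g)
include hg

theorem dv1_du1_comm : dv1 (du1 g) = du1 (dv1 g) := by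
  have hg' := (hg.fderiv_right (m := 1) le_rfl).differentiable one_ne_zero
  funext p
  unfold du1 dv1
  rw [fderiv_fderiv_apply (hg' p), fderiv_fderiv_apply (hg' p)]
  exact hg.contDiffAt.isSymmSndFDerivAt (by simp) _ _

theorem ContDiff.differentiable_du1 : Differentiable ℝ (du1 g) :=
  ((hg.fderiv_right (m := 1) le_rfl).differentiable one_ne_zero).clm_apply
    (differentiable_const _)

end SecondOrder

theorem dv1_du1_add {f g : ℝ × ℝ → ℝ} (hf : ContDiff ℝ 2 f) (hg : ContDiff ℝ 2 g) :
    dv1 (du1 (f + g)) = dv1 (du1 f) + dv1 (du1 g) := by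
  rw [du1_add (hf.differentiable two_ne_zero) (hg.differentiable two_ne_zero),
    dv1_add hf.differentiable_du1 hg.differentiable_du1]

theorem dv1_du1_sub {f g : ℝ × ℝ → ℝ} (hf : ContDiff ℝ 2 f) (hg : ContDiff ℝ 2 g) :
    dv1 (du1 (f - g)) = dv1 (du1 f) - dv1 (du1 g) := by
  rw [du1_sub (hf.differentiable two_ne_zero) (hg.differentiable two_ne_zero),
    dv1_sub hf.differentiable_du1 hg.differentiable_du1]

section Backlund

variable {lam : ℝ} {a b : ℝ × ℝ → ℝ} (hlam : lam ≠ 0)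
  (hu : ∀ p, du1 a p = 1 / lam * Real.sin (b p)) (hv : ∀ p, dv1 b p = lam * Real.sin (a p))
include hlam hu hv

theorem dv1_du1_eq_sin_mul_cos (hb : Differentiable ℝ b) (p : ℝ × ℝ) :
    dv1 (du1 a) p = Real.sin (a p) * Real.cos (b p) := by
  rw [funext hu, dv1_const_mul_sin hb, hv]
  field_simp

theorem dv1_du1_eq_cos_mul_sin (ha : Differentiable ℝ a) (hb : ContDiff ℝ 2 b) (p : ℝ × ℝ) :
    dv1 (du1 b) p = Real.cos (a p) * Real.sin (b p) := by
  rw [dv1_du1_comm hb, funext hv, du1_const_mul_sin ha, hu]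
  field_simp

end Backlund

/-- If `ψ` and `ψ*` are related by the Bäcklund transformation with parameter `λ ≠ 0`,
then both satisfy the sine-Gordon equation `ψ_uv = sin ψ`. -/
theorem backlund_gives_sineGordon (lam : ℝ) (hlam : lam ≠ 0)
    (ψ ψs : ℝ × ℝ → ℝ) (hψ : ContDiff ℝ 2 ψ) (hψs : ContDiff ℝ 2 ψs)
    (h1 : ∀ p : ℝ × ℝ,
      du1 (fun q => (ψ q + ψs q) / 2) p = (1 / lam) * Real.sin ((ψ p - ψs p) / 2))
    (h2 : ∀ p : ℝ × ℝ,
      dv1 (fun q => (ψ q - ψs q) / 2) p = lam * Real.sin ((ψ p + ψs p) / 2)) :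
    ∀ p : ℝ × ℝ, dv1 (du1 ψ) p = Real.sin (ψ p) ∧ dv1 (du1 ψs) p = Real.sin (ψs p) := by
  set a : ℝ × ℝ → ℝ := fun q => (ψ q + ψs q) / 2
  set b : ℝ × ℝ → ℝ := fun q => (ψ q - ψs q) / 2
  have hu : ∀ p, du1 a p = 1 / lam * Real.sin (b p) := h1
  have hv : ∀ p, dv1 b p = lam * Real.sin (a p) := h2
  have ha : ContDiff ℝ 2 a := (hψ.add hψs).div_const 2
  have hb : ContDiff ℝ 2 b := (hψ.sub hψs).div_const 2
  have hψ_eq : ψ = a + b := by funext q; simp only [a, b, Pi.add_apply]; ring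
  have hψs_eq : ψs = a - b := by funext q; simp only [a, b, Pi.sub_apply]; ring
  intro p
  rw [hψ_eq, hψs_eq, dv1_du1_add ha hb, dv1_du1_sub ha hb]
  simp only [Pi.add_apply, Pi.sub_apply, Real.sin_add, Real.sin_sub,
    dv1_du1_eq_sin_mul_cos hlam hu hv (hb.differentiable two_ne_zero),
    dv1_du1_eq_cos_mul_sin hlam hu hv (ha.differentiable two_ne_zero) hb, and_self]
end
end

section
/- Let f : U → ℝ³ be a smooth isothermic immersion with conformal factor E and unit normal N, and let f* : U → ℝ³ satisfy f*_u = f_u/E and f*_v = −f_v/E. Then f* is an immersion with f*_u·f*_v = 0 and ‖f*_u‖² = ‖f*_v‖² = 1/E (so its induced metric is E⁻¹(du² + dv²), the conformal factor of f* is the inverse of that of f), and its unit normal satisfies N* = (f*_u × f*_v)/‖f*_u × f*_v‖ = −N at every point (the tangent planes of f and f* are parallel with opposite orientations). -/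
noncomputable section

open Real

lemma dot3_smul_smul (t s : ℝ) (u v : V3) :
    dot3 (t • u) (s • v) = t * s * dot3 u v := by
  simp [dot3, Pi.smul_apply, smul_eq_mul]; ring

lemma cross3_smul_smul (t s : ℝ) (u v : V3) :
    cross3 (t • u) (s • v) = (t * s) • cross3 u v := by
  funext i
  fin_cases i <;> simp [cross3, Pi.smul_apply, smul_eq_mul] <;> ring

lemma norm3_smul (t : ℝ) (u : V3) : norm3 (t • u) = |t| * norm3 u := by
  have : dot3 (t • u) (t • u) = t ^ 2 * dot3 u u := by
    simp [dot3, Pi.smul_apply, smul_eq_mul]; ring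
  rw [norm3, this, Real.sqrt_mul (sq_nonneg t), Real.sqrt_sq_eq_abs, norm3]

/-- The dual of an isothermic immersion is an immersion with conformal factor `E⁻¹`, and its
unit normal is the opposite of the original one: the tangent planes are parallel with
opposite orientations. -/
theorem christoffel_dual_metric_and_normal
    (U : Set (ℝ × ℝ)) (hU : IsOpen U)
    (f : ℝ × ℝ → V3) (hf : ContDiffOn ℝ (⊤ : ℕ∞) f U) (hfi : Immersed f U)
    (E : ℝ × ℝ → ℝ)
    (hconf : ∀ p ∈ U, dot3 (Du f p) (Dv f p) = 0 ∧
      dot3 (Du f p) (Du f p) = E p ∧ dot3 (Dv f p) (Dv f p) = E p ∧ 0 < E p)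
    (hiso : ∀ p ∈ U, dot3 (Dv (Du f) p) (normalVec f p) = 0)
    (fs : ℝ × ℝ → V3)
    (hdual : ∀ p ∈ U, Du fs p = (E p)⁻¹ • Du f p ∧ Dv fs p = -((E p)⁻¹ • Dv f p)) :
    ∀ p ∈ U,
      cross3 (Du fs p) (Dv fs p) ≠ 0 ∧
      dot3 (Du fs p) (Dv fs p) = 0 ∧
      dot3 (Du fs p) (Du fs p) = (E p)⁻¹ ∧
      dot3 (Dv fs p) (Dv fs p) = (E p)⁻¹ ∧
      normalVec fs p = -normalVec f p := by
  intro p hp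
  obtain ⟨hF, hE, hG, hEpos⟩ := hconf p hp
  obtain ⟨hdu, hdv⟩ := hdual p hp
  have hEne : E p ≠ 0 := ne_of_gt hEpos
  set a := Du f p
  set b := Dv f p
  set t : ℝ := -((E p)⁻¹ * (E p)⁻¹) with ht
  have htneg : t < 0 := by
    have : 0 < (E p)⁻¹ * (E p)⁻¹ := by positivity
    simpa [ht] using neg_neg_of_pos this
  have hdv' : Dv fs p = (-(E p)⁻¹) • b := by
    rw [hdv]; simp [neg_smul]
  have hcross : cross3 (Du fs p) (Dv fs p) = t • cross3 a b := by
    rw [hdu, hdv', cross3_smul_smul]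
    congr 1
    ring
  have hcne : cross3 a b ≠ 0 := hfi p hp
  refine ⟨?_, ?_, ?_, ?_, ?_⟩
  · rw [hcross]
    exact smul_ne_zero (ne_of_lt htneg) hcne
  · rw [hdu, hdv', dot3_smul_smul, hF]; ring
  · rw [hdu, dot3_smul_smul, hE]; field_simp
  · rw [hdv', dot3_smul_smul, hG]; field_simp
  · rw [normalVec, normalVec, hcross, norm3_smul, abs_of_neg htneg,
      smul_smul, mul_inv]
    rw [show ((-t)⁻¹ * (norm3 (cross3 a b))⁻¹) * t
        = -((norm3 (cross3 a b))⁻¹) by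
      rw [inv_neg, neg_mul, neg_mul, neg_eq_iff_eq_neg, neg_neg,
        mul_comm (t⁻¹), mul_assoc, inv_mul_cancel₀ (ne_of_lt htneg), mul_one]]
    simp [neg_smul]
    rfl
end
end
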